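/- arXiv:0901.0370 — 2 statements merged into one kernel-verified Lean document; each statement's English description precedes it below -/
import Mathlib

section
/- Let M = I ×_f F be a standard static space-time with dim F ≥ 2. If the Ricci tensor Ric_{g_F} of (F,g_F) and the tensor Q_{g_F}^f = (Δ_{g_F} f) g_F − Hess_{g_F} f are both positive semi-definite, then M satisfies the timelike convergence condition and the null convergence condition: Ric(w,w) ≥ 0 for every causal tangent vector w on M. -/
/-!
Tracing `Q = Δf · g_F - Hess f ≥ 0` over an orthonormal basis gives `(n - 1) Δf ≥ 0`, hence
`Δf ≥ 0` since `n ≥ 2`. For a causal `w = (a, v)` we have `|v|² ≤ f² a²`, so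
`Hess f (v, v) ≤ Δf |v|² ≤ Δf f² a²`: the Hessian term of the Ricci formula is dominated by
`f Δf a²`, and what remains is `Ric_{g_F}(v, v) ≥ 0`.
-/

open RealInnerProductSpace

section TraceBound

variable {V ι : Type*} [NormedAddCommGroup V] [InnerProductSpace ℝ V] [Fintype ι]

theorem OrthonormalBasis.sum_le_card_mul_of_le_mul_inner (e : OrthonormalBasis ι ℝ V)
    {b : V → V → ℝ} {c : ℝ} (hb : ∀ v, b v v ≤ c * ⟪v, v⟫) :
    ∑ i, b (e i) (e i) ≤ Fintype.card ι * c := by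
  calc ∑ i, b (e i) (e i) ≤ ∑ _i : ι, c :=
        Finset.sum_le_sum fun i _ => by simpa [real_inner_self_eq_norm_sq] using hb (e i)
    _ = Fintype.card ι * c := by simp

theorem OrthonormalBasis.trace_nonneg_of_le_trace_mul_inner [FiniteDimensional ℝ V]
    (e : OrthonormalBasis ι ℝ V) (hn : 2 ≤ Module.finrank ℝ V)
    {b : V → V → ℝ} {c : ℝ} (hc : c = ∑ i, b (e i) (e i)) (hb : ∀ v, b v v ≤ c * ⟪v, v⟫) :
    0 ≤ c := by
  have htrace : c ≤ Fintype.card ι * c := hc.trans_le (e.sum_le_card_mul_of_le_mul_inner hb)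
  have hcard : (2 : ℝ) ≤ Fintype.card ι := by
    rw [← Module.finrank_eq_card_basis e.toBasis]
    exact_mod_cast hn
  nlinarith

end TraceBound

theorem add_mul_sub_inv_mul_nonneg_of_causal {f Δ a h r n : ℝ} (hf : 0 < f) (hΔ : 0 ≤ Δ)
    (hh : h ≤ Δ * n) (hcausal : -f ^ 2 * (a * a) + n ≤ 0) (hr : 0 ≤ r) :
    0 ≤ r + f * Δ * (a * a) - 1 / f * h := by
  have key : 1 / f * h ≤ f * Δ * (a * a) :=
    calc 1 / f * h ≤ 1 / f * (Δ * (f ^ 2 * (a * a))) := by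
          gcongr
          exact hh.trans (by gcongr; linarith)
      _ = f * Δ * (a * a) := by field_simp
  linarith

/-- Let `M = I ×_f F` be a standard static space-time with `dim F ≥ 2`
(tangent vectors of `M` modeled as pairs `(a, v) ∈ ℝ × V`; the Ricci tensor of
`(M,g)` given by the standard static Ricci formula).  If the Ricci tensor
`Ric_{g_F}` of `(F,g_F)` and the tensor `Q_{g_F}^f = (Δ_{g_F} f) g_F − Hess_{g_F} f`
are both positive semi-definite, then `M` satisfies the timelike and null
convergence conditions: `Ric(w,w) ≥ 0` for every causal tangent vector `w`
(i.e. `w ≠ 0` with `g(w,w) ≤ 0`). -/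
theorem RicF_Q_psd_implies_TCC_NCC
    {F V : Type*} [NormedAddCommGroup V] [InnerProductSpace ℝ V]
    [FiniteDimensional ℝ V]
    (f : F → ℝ) (hf : ∀ p, 0 < f p)
    (Δf : F → ℝ) (Hf RicF : F → V → V → ℝ)
    (RicM : F → (ℝ × V) → (ℝ × V) → ℝ)     -- Ricci tensor of (M, g)
    (gM : F → (ℝ × V) → (ℝ × V) → ℝ)       -- the metric g = −f² dt² ⊕ g_F
    (hs : 2 ≤ Module.finrank ℝ V)
    (hg : ∀ p a v b w, gM p (a, v) (b, w) = -(f p) ^ 2 * (a * b) + ⟪v, w⟫)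
    (hΔ : ∀ p, Δf p = ∑ i, Hf p (stdOrthonormalBasis ℝ V i) (stdOrthonormalBasis ℝ V i))
    (hRic : ∀ p u₁ u₂ v₁ v₂, RicM p (u₁, v₁) (u₂, v₂)
      = RicF p v₁ v₂ + f p * Δf p * (u₁ * u₂) - (1 / f p) * Hf p v₁ v₂)
    -- Ric_{g_F} positive semi-definite:
    (hRicFpsd : ∀ p v, 0 ≤ RicF p v v)
    -- Q_{g_F}^f positive semi-definite:
    (hQpsd : ∀ p v, 0 ≤ Δf p * ⟪v, v⟫ - Hf p v v) :
    ∀ p (w : ℝ × V), w ≠ 0 → gM p w w ≤ 0 → 0 ≤ RicM p w w := by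
  rintro p ⟨a, v⟩ - hcausal
  rw [hg] at hcausal
  rw [hRic]
  have hHf : ∀ v, Hf p v v ≤ Δf p * ⟪v, v⟫ := fun v => sub_nonneg.mp (hQpsd p v)
  have hΔf : 0 ≤ Δf p :=
    (stdOrthonormalBasis ℝ V).trace_nonneg_of_le_trace_mul_inner hs (hΔ p) hHf
  exact add_mul_sub_inv_mul_nonneg_of_causal (hf p) hΔf (hHf v) hcausal (hRicFpsd p v)
end

section
/- Let M = I ×_f F be a standard static space-time satisfying the weak energy condition (T(x,x) ≥ 0 for all timelike tangent vectors x, with 8π T = Ric − (1/2) τ g). Then the scalar curvature of the Riemannian part is nonnegative: τ_{g_F} ≥ 0. -/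
open RealInnerProductSpace

/-- Let `M = I ×_f F` be a standard static space-time with metric
`g = −f² dt² ⊕ g_F` (tangent vectors of `M` modeled as pairs `(a, v) ∈ ℝ × V`;
Ricci and scalar curvatures of `(M,g)` given by the standard static formulas,
and `8π T = Ric − (1/2) τ g`).  If `(M,g)` satisfies the weak energy condition
(`T(x,x) ≥ 0` for all timelike tangent vectors `x`), then the scalar curvature of
the Riemannian part is nonnegative: `τ_{g_F} ≥ 0`. -/
theorem WEC_implies_nonneg_fiber_scalar_curvature
    {F V : Type*} [NormedAddCommGroup V] [InnerProductSpace ℝ V]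
    [FiniteDimensional ℝ V]
    (f : F → ℝ) (hf : ∀ p, 0 < f p)
    (Δf : F → ℝ) (Hf RicF : F → V → V → ℝ)
    (RicM : F → (ℝ × V) → (ℝ × V) → ℝ)     -- Ricci tensor of (M, g)
    (gM : F → (ℝ × V) → (ℝ × V) → ℝ)       -- the metric g = −f² dt² ⊕ g_F
    (T : F → (ℝ × V) → (ℝ × V) → ℝ)        -- the energy-momentum tensor
    (scalM scalF : F → ℝ)                  -- scalar curvatures of (M,g) and (F,g_F)
    (hg : ∀ p a v b w, gM p (a, v) (b, w) = -(f p) ^ 2 * (a * b) + ⟪v, w⟫)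
    (hHf0 : ∀ p, Hf p 0 0 = 0)
    (hRicF0 : ∀ p, RicF p 0 0 = 0)
    (hRic : ∀ p u₁ u₂ v₁ v₂, RicM p (u₁, v₁) (u₂, v₂)
      = RicF p v₁ v₂ + f p * Δf p * (u₁ * u₂) - (1 / f p) * Hf p v₁ v₂)
    (hscalM : ∀ p, scalM p = scalF p - (2 / f p) * Δf p)
    -- Einstein's equation:
    (hEinstein : ∀ p x y, RicM p x y - (1 / 2) * scalM p * gM p x y
      = 8 * Real.pi * T p x y)
    -- the weak energy condition:
    (hWEC : ∀ p (x : ℝ × V), gM p x x < 0 → 0 ≤ T p x x) :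
    ∀ p, 0 ≤ scalF p := by
  intro p
  have hfp := hf p
  have hneg : gM p (1, (0:V)) (1, 0) < 0 := by
    rw [hg]; simp; positivity
  have hT := hWEC p (1, 0) hneg
  have hE := hEinstein p (1, (0:V)) (1, 0)
  rw [hRic, hg, hscalM, hRicF0, hHf0] at hE
  simp only [inner_zero_left, mul_one] at hE
  have key : (1 / 2) * scalF p * f p ^ 2 = 8 * Real.pi * T p (1, 0) (1, 0) := by
    field_simp at hE ⊢; nlinarith [hE]
  nlinarith [key, mul_pos hfp hfp, mul_nonneg (mul_nonneg (by norm_num : (0:ℝ) ≤ 8) Real.pi_pos.le) hT]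
end
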